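/- arXiv:2410.02753 — 3 statements merged into one kernel-verified Lean document; each statement's English description precedes it below -/
import Mathlib

section
/- (Z-distance preservation) Let H_X, H_Z define a CSS code, and let H̃_X = [[H_X, 0], [f₁^T, ∂₁^T]], H̃_Z' = [[H_Z, f₀], [0, G]] be the cone code with the gauge-fixed Z-matrix, where f is a chain map (H_Z f₁ = f₀ ∂₁) and G satisfies ker G = im ∂₁. Then every vector v = (v_C, v_A) ∈ ker H̃_X whose restriction v_C to the original qubits lies in the row space of H_Z (i.e., v_C = H_Z^T w₁ for some w₁) lies entirely in the row space of H̃_Z'^T; consequently, the minimum weight of elements of ker H̃_X not in the row space of H̃_Z'^T is at least the Z-distance d_Z of the original code. -/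
/-!
Write `v = (v_C, v_A)`. If `v_C = H_Zᵀ w₁`, the chain map condition gives
`∂₁ᵀ (f₀ᵀ w₁) = f₁ᵀ v_C = ∂₁ᵀ v_A` (we are in characteristic two), so `v_A + f₀ᵀ w₁`
lies in `ker ∂₁ᵀ = (im ∂₁)ᗮ = (ker G)ᗮ = im Gᵀ`, say `v_A + f₀ᵀ w₁ = Gᵀ u₂`;
then `v = H̃_Z'ᵀ (w₁, u₂)`.
Hence a vector of `ker H̃_X` outside the row space of `H̃_Z'` restricts to a vector of `ker H_X`
outside the row space of `H_Z`, whose weight is at least `d_Z` and at most that of `v`.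
-/

open Matrix

theorem Matrix.exists_transpose_mulVec_eq_of_forall_ker_dotProduct_eq_zero
    {K ι κ : Type*} [Field K] [Fintype ι] [Fintype κ] (G : Matrix κ ι K) (y : ι → K)
    (h : ∀ x, G *ᵥ x = 0 → y ⬝ᵥ x = 0) : ∃ u, Gᵀ *ᵥ u = y := by
  classical
  obtain ⟨ψ, hψ⟩ : dotProductEquiv K ι y ∈ LinearMap.range G.mulVecLin.dualMap := by
    rw [LinearMap.range_dualMap_eq_dualAnnihilator_ker, Submodule.mem_dualAnnihilator]
    exact h
  set u := (dotProductEquiv K κ).symm ψ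
  refine ⟨u, (dotProductEquiv K ι).injective (LinearMap.ext fun x => ?_)⟩
  have hu : ψ (G *ᵥ x) = u ⬝ᵥ G *ᵥ x := by
    rw [← (dotProductEquiv K κ).apply_symm_apply ψ]
    rfl
  rw [← hψ]
  simp [hu, dotProduct_mulVec, mulVec_transpose]

theorem Matrix.fromBlocks_zero₁₂_mulVec_eq_zero_iff {R l m n o : Type*}
    [NonUnitalNonAssocSemiring R] [Fintype l] [Fintype m] {A : Matrix n l R}
    {C : Matrix o l R} {D : Matrix o m R} {v : l ⊕ m → R} :
    fromBlocks A 0 C D *ᵥ v = 0 ↔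
      A *ᵥ (v ∘ Sum.inl) = 0 ∧ C *ᵥ (v ∘ Sum.inl) + D *ᵥ (v ∘ Sum.inr) = 0 := by
  rw [fromBlocks_mulVec, ← Sum.elim_zero_zero, Sum.elim_eq_iff, zero_mulVec, add_zero]

theorem hammingNorm_comp_inl_le {α β γ : Type*} [Fintype α] [Fintype β] [DecidableEq γ]
    [Zero γ] (v : α ⊕ β → γ) : hammingNorm (v ∘ Sum.inl) ≤ hammingNorm v :=
  Finset.card_le_card_of_injOn Sum.inl (fun _ hi => by simpa using hi) Sum.inl_injective.injOn

section ConeCode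

variable {K ιn ιm ιw ιx ιz ιg : Type*} [Field K] [CharP K 2]
  [Fintype ιn] [Fintype ιm] [Fintype ιw] [Fintype ιz] [Fintype ιg]
  {HX : Matrix ιx ιn K} {HZ : Matrix ιz ιn K} {f1 : Matrix ιn ιw K} {f0 : Matrix ιz ιm K}
  {D1 : Matrix ιm ιw K} {G : Matrix ιg ιm K}

theorem exists_eq_fromBlocks_transpose_mulVec_of_comp_inl_eq (hchain : HZ * f1 = f0 * D1)
    (hG : ∀ x, G *ᵥ x = 0 → ∃ y, D1 *ᵥ y = x) {v : ιn ⊕ ιm → K}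
    (hv : fromBlocks HX 0 f1ᵀ D1ᵀ *ᵥ v = 0) {w1 : ιz → K}
    (hw1 : v ∘ Sum.inl = HZᵀ *ᵥ w1) :
    ∃ u, v = (fromBlocks HZ f0 0 G)ᵀ *ᵥ u := by
  have hcone := (fromBlocks_zero₁₂_mulVec_eq_zero_iff.mp hv).2
  have hf0 : D1ᵀ *ᵥ (f0ᵀ *ᵥ w1) = f1ᵀ *ᵥ (v ∘ Sum.inl) := by
    rw [hw1, mulVec_mulVec, mulVec_mulVec, ← transpose_mul, ← transpose_mul, hchain]
  have hy : D1ᵀ *ᵥ (f0ᵀ *ᵥ w1 + v ∘ Sum.inr) = 0 := by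
    rw [mulVec_add, hf0, hcone]
  obtain ⟨u2, hu2⟩ := G.exists_transpose_mulVec_eq_of_forall_ker_dotProduct_eq_zero
    (f0ᵀ *ᵥ w1 + v ∘ Sum.inr) fun x hx => by
      obtain ⟨t, rfl⟩ := hG x hx
      rw [dotProduct_mulVec, ← mulVec_transpose, hy, zero_dotProduct]
  refine ⟨Sum.elim w1 u2, ?_⟩
  rw [fromBlocks_transpose, fromBlocks_mulVec, transpose_zero, zero_mulVec, add_zero,
    Sum.elim_comp_inl, Sum.elim_comp_inr, hu2, ← hw1, ← Sum.elim_comp_inl_inr v]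
  congr 1
  funext j
  exact (CharTwo.add_cancel_left _ _).symm

theorem le_hammingNorm_of_fromBlocks_mulVec_eq_zero [DecidableEq K] {dZ : ℕ}
    (hdZ : ∀ x, HX *ᵥ x = 0 → (∀ w1, x ≠ HZᵀ *ᵥ w1) → dZ ≤ hammingNorm x)
    (hchain : HZ * f1 = f0 * D1) (hG : ∀ x, G *ᵥ x = 0 → ∃ y, D1 *ᵥ y = x)
    {v : ιn ⊕ ιm → K} (hv : fromBlocks HX 0 f1ᵀ D1ᵀ *ᵥ v = 0)
    (hvZ : ∀ u, v ≠ (fromBlocks HZ f0 0 G)ᵀ *ᵥ u) : dZ ≤ hammingNorm v := by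
  have hvC : ∀ w1, v ∘ Sum.inl ≠ HZᵀ *ᵥ w1 := fun w1 hw1 => by
    obtain ⟨u, hu⟩ := exists_eq_fromBlocks_transpose_mulVec_of_comp_inl_eq hchain hG hv hw1
    exact hvZ u hu
  calc dZ ≤ hammingNorm (v ∘ Sum.inl) :=
        hdZ _ (fromBlocks_zero₁₂_mulVec_eq_zero_iff.mp hv).1 hvC
    _ ≤ hammingNorm v := hammingNorm_comp_inl_le v

end ConeCode

theorem coneCode_Z_distance_general (n nX nZ w m g dZ : ℕ)
    (HX : Matrix (Fin nX) (Fin n) (ZMod 2))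
    (HZ : Matrix (Fin nZ) (Fin n) (ZMod 2))
    (f1 : Matrix (Fin n) (Fin w) (ZMod 2))
    (f0 : Matrix (Fin nZ) (Fin m) (ZMod 2))
    (D1 : Matrix (Fin m) (Fin w) (ZMod 2))
    (G : Matrix (Fin g) (Fin m) (ZMod 2))
    (hchain : HZ * f1 = f0 * D1)
    (hG : ∀ x : Fin m → ZMod 2, G.mulVec x = 0 ↔ ∃ y, D1.mulVec y = x)
    (hdZ : ∀ x : Fin n → ZMod 2, HX.mulVec x = 0 →
      (∀ w1, x ≠ HZᵀ.mulVec w1) → dZ ≤ hammingNorm x) :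
    (∀ v : Fin n ⊕ Fin m → ZMod 2,
      (Matrix.fromBlocks HX 0 f1ᵀ D1ᵀ).mulVec v = 0 →
      (∃ w1, (fun j => v (Sum.inl j)) = HZᵀ.mulVec w1) →
      ∃ u, v = (Matrix.fromBlocks HZ f0 0 G)ᵀ.mulVec u) ∧
    (∀ v : Fin n ⊕ Fin m → ZMod 2,
      (Matrix.fromBlocks HX 0 f1ᵀ D1ᵀ).mulVec v = 0 →
      (∀ u, v ≠ (Matrix.fromBlocks HZ f0 0 G)ᵀ.mulVec u) →
      dZ ≤ hammingNorm v) := by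
  have hG' : ∀ x, G *ᵥ x = 0 → ∃ y, D1 *ᵥ y = x := fun x => (hG x).mp
  exact ⟨fun _ hv ⟨_, hw1⟩ =>
      exists_eq_fromBlocks_transpose_mulVec_of_comp_inl_eq hchain hG' hv hw1,
    fun _ => le_hammingNorm_of_fromBlocks_mulVec_eq_zero hdZ hchain hG'⟩

/-- Z-distance preservation for the cone code. With
`H̃_X = [[H_X, 0], [f₁^T, ∂₁^T]]`, `H̃_Z' = [[H_Z, f₀], [0, G]]`,
chain map condition `H_Z f₁ = f₀ ∂₁` and `ker G = im ∂₁`: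
(1) every `v ∈ ker H̃_X` whose restriction to the original qubits lies in
the row space of `H_Z` lies in the row space of `H̃_Z'`; consequently
(2) every element of `ker H̃_X` not in the row space of `H̃_Z'` has
Hamming weight at least the Z-distance `d_Z` of the original code. -/
theorem coneCode_Z_distance (n nX nZ w m g dZ : ℕ)
    (HX : Matrix (Fin nX) (Fin n) (ZMod 2))
    (HZ : Matrix (Fin nZ) (Fin n) (ZMod 2))
    (f1 : Matrix (Fin n) (Fin w) (ZMod 2))
    (f0 : Matrix (Fin nZ) (Fin m) (ZMod 2))
    (D1 : Matrix (Fin m) (Fin w) (ZMod 2))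
    (G : Matrix (Fin g) (Fin m) (ZMod 2))
    (hcss : HZ * HXᵀ = 0)
    (hchain : HZ * f1 = f0 * D1)
    (hG : ∀ x : Fin m → ZMod 2, G.mulVec x = 0 ↔ ∃ y, D1.mulVec y = x)
    (hdZ : ∀ x : Fin n → ZMod 2, HX.mulVec x = 0 →
      (∀ w1, x ≠ HZᵀ.mulVec w1) → dZ ≤ hammingNorm x) :
    (∀ v : Fin n ⊕ Fin m → ZMod 2,
      (Matrix.fromBlocks HX 0 f1ᵀ D1ᵀ).mulVec v = 0 →
      (∃ w1, (fun j => v (Sum.inl j)) = HZᵀ.mulVec w1) →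
      ∃ u, v = (Matrix.fromBlocks HZ f0 0 G)ᵀ.mulVec u) ∧
    (∀ v : Fin n ⊕ Fin m → ZMod 2,
      (Matrix.fromBlocks HX 0 f1ᵀ D1ᵀ).mulVec v = 0 →
      (∀ u, v ≠ (Matrix.fromBlocks HZ f0 0 G)ᵀ.mulVec u) →
      dZ ≤ hammingNorm v) :=
  coneCode_Z_distance_general n nX nZ w m g dZ HX HZ f1 f0 D1 G hchain hG hdZ
end

section
/- (X-distance preservation) Let C be a CSS code of distance d with X-logical operator X̄ of weight w supported on Q, and let the cone code be built with f₁ given by the inclusion of Q (columns of f₁ are standard basis vectors indexed by Q) and ∂₁ an incidence matrix of a hypergraph on w vertices with Cheeger constant h ≥ 1. Let X̄₂ be any X-logical operator of C of weight w₂ ≥ d such that X̄·X̄₂ also has weight ≥ d. Then for every subset R ⊆ Q, the vector L = X̄₂ + ∑_{q∈R} S_q, where S_q = (e_q, ∂₁-column corresponding to q) are the new X-stabilizer generators, has Hamming weight wt(L) ≥ d. -/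
/-!
Write `L = (X̄₂ + f₁ v, ∂₁ v)`, where `v` is the indicator of `R`. If `|v| ≤ w/2`, the Cheeger
bound gives `|∂₁ v| ≥ |v| = |f₁ v|`, so by the triangle inequality
`|L| ≥ |X̄₂ + f₁ v| + |f₁ v| ≥ |X̄₂| ≥ d`. Otherwise pass to the complement `u = v + 1`: the rows
of `∂₁` have even weight, so `∂₁ u = ∂₁ v`, while `f₁ v = X̄ + f₁ u`. Hence
`L = ((X̄ + X̄₂) + f₁ u, ∂₁ u)` with `|u| ≤ w/2`, and the same argument gives
`|L| ≥ |X̄ + X̄₂| ≥ d`.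
-/

open Matrix Finset Function

theorem hammingNorm_sumElim {ι κ β : Type*} [Fintype ι] [Fintype κ] [DecidableEq β] [Zero β]
    (f : ι → β) (g : κ → β) :
    hammingNorm (Sum.elim f g) = hammingNorm f + hammingNorm g := by
  simp only [hammingNorm, card_filter, Fintype.sum_sum_type, Sum.elim_inl, Sum.elim_inr]
  rfl

theorem hammingNorm_le_hammingNorm_add_add {ι β : Type*} [Fintype ι] [DecidableEq β]
    [AddCommGroup β] (a b : ι → β) :
    hammingNorm a ≤ hammingNorm (a + b) + hammingNorm b := by
  calc hammingNorm a = hammingDist b (a + b) := by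
        rw [hammingDist_eq_hammingNorm, add_comm a b, neg_add_cancel_left]
    _ ≤ hammingDist b 0 + hammingDist 0 (a + b) := hammingDist_triangle _ _ _
    _ = hammingNorm (a + b) + hammingNorm b := by
        rw [hammingDist_zero_right, hammingDist_zero_left, add_comm]

theorem hammingNorm_extend_zero {ι κ β : Type*} [Fintype ι] [Fintype κ] [DecidableEq β] [Zero β]
    {q : κ → ι} (hq : Injective q) (v : κ → β) :
    hammingNorm (extend q v 0) = hammingNorm v := by
  classical
  rw [hammingNorm, hammingNorm, ← card_image_of_injective _ hq]
  congr 1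
  ext i
  simp only [mem_filter, mem_univ, true_and, mem_image]
  by_cases hi : ∃ j, q j = i
  · obtain ⟨j, rfl⟩ := hi
    simp [hq.extend_apply, hq.eq_iff]
  · rw [extend_apply' _ _ _ hi]
    simp only [Pi.zero_apply, ne_eq, not_true_eq_false, false_iff, not_exists, not_and]
    exact fun j _ hj => hi ⟨j, hj⟩

theorem hammingNorm_add_one_add_hammingNorm {ι : Type*} [Fintype ι] (v : ι → ZMod 2) :
    hammingNorm (v + 1) + hammingNorm v = Fintype.card ι := by
  have hflip : ∀ x : ZMod 2, x + 1 ≠ 0 ↔ ¬x ≠ 0 := by decide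
  simp only [hammingNorm, Pi.add_apply, Pi.one_apply, hflip]
  rw [add_comm, card_filter_add_card_filter_not, card_univ]

section InclusionMatrix

variable {ι κ R : Type*} [Fintype κ] [DecidableEq ι] [NonAssocSemiring R] {q : κ → ι}

/-- The paper's `f₁`. -/
def inclusionMatrix (q : κ → ι) : Matrix ι κ R :=
  of fun i j => if i = q j then 1 else 0

theorem inclusionMatrix_mulVec (hq : Injective q) (v : κ → R) :
    inclusionMatrix q *ᵥ v = extend q v 0 := by
  ext i
  by_cases hi : ∃ j, q j = i
  · obtain ⟨j, rfl⟩ := hi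
    simp only [inclusionMatrix, mulVec, dotProduct, of_apply, ite_mul, one_mul, zero_mul,
      hq.extend_apply]
    rw [sum_eq_single j (fun i _ hij => if_neg (hq.ne hij.symm)) (by simp), if_pos rfl]
  · rw [extend_apply' _ _ _ hi]
    refine sum_eq_zero fun j _ => ?_
    have hij : i ≠ q j := fun h => hi ⟨j, h.symm⟩
    simp [inclusionMatrix, hij]

theorem inclusionMatrix_mulVec_one [Fintype ι] (hq : Injective q) :
    inclusionMatrix q *ᵥ (1 : κ → R) = fun i => if i ∈ univ.image q then 1 else 0 := by
  ext i
  rw [inclusionMatrix_mulVec hq]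
  by_cases hi : ∃ j, q j = i
  · obtain ⟨j, rfl⟩ := hi
    simp [hq.extend_apply]
  · simp [not_exists.mp hi]

end InclusionMatrix

theorem le_hammingNorm_add_inclusionMatrix_mulVec_add {ι κ μ R : Type*} [Fintype ι] [Fintype κ]
    [Fintype μ] [DecidableEq ι] [DecidableEq R] [Ring R] {q : κ → ι} (hq : Injective q)
    (D : Matrix μ κ R)
    {Y : ι → R} {v : κ → R} (hv : hammingNorm v ≤ hammingNorm (D *ᵥ v)) :
    hammingNorm Y ≤ hammingNorm (Y + inclusionMatrix q *ᵥ v) + hammingNorm (D *ᵥ v) := by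
  calc hammingNorm Y ≤ hammingNorm (Y + inclusionMatrix q *ᵥ v) + hammingNorm v := by
        simpa [inclusionMatrix_mulVec hq, hammingNorm_extend_zero hq] using
          hammingNorm_le_hammingNorm_add_add Y (inclusionMatrix q *ᵥ v)
    _ ≤ _ := Nat.add_le_add_left hv _

theorem coneCode_X_distance_general (n m w d : ℕ)
    (q : Fin w → Fin n) (hq : Function.Injective q)
    (D1 : Matrix (Fin m) (Fin w) (ZMod 2))
    (heven : D1.mulVec (fun _ => 1) = 0)
    (hcheeger : ∀ v : Fin w → ZMod 2, v ≠ 0 → 2 * hammingNorm v ≤ w →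
      hammingNorm v ≤ hammingNorm (D1.mulVec v))
    (X2 : Fin n → ZMod 2)
    (hw2 : d ≤ hammingNorm X2)
    (hsum : d ≤ hammingNorm
      (fun i => (if i ∈ Finset.univ.image q then (1 : ZMod 2) else 0) + X2 i)) :
    ∀ v : Fin w → ZMod 2,
      d ≤ hammingNorm (Sum.elim
        (fun i => X2 i +
          (Matrix.of fun i j => if i = q j then (1 : ZMod 2) else 0).mulVec v i)
        (D1.mulVec v)) := by
  intro v
  have hf₁ : (of fun i j => if i = q j then (1 : ZMod 2) else 0) = inclusionMatrix q := rfl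
  have hexp : ∀ u : Fin w → ZMod 2, 2 * hammingNorm u ≤ w →
      hammingNorm u ≤ hammingNorm (D1 *ᵥ u) := fun u hu => by
    rcases eq_or_ne u 0 with rfl | hu0
    · simp
    · exact hcheeger u hu0 hu
  rw [hf₁, hammingNorm_sumElim]
  by_cases hv : 2 * hammingNorm v ≤ w
  · exact hw2.trans (le_hammingNorm_add_inclusionMatrix_mulVec_add hq D1 (hexp v hv))
  · have hu : 2 * hammingNorm (v + 1) ≤ w := by
      have := hammingNorm_add_one_add_hammingNorm v
      rw [Fintype.card_fin] at this
      omega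
    have hD : D1 *ᵥ (v + 1) = D1 *ᵥ v := by
      rw [mulVec_add, Pi.one_def, heven, add_zero]
    have hL : (fun i => X2 i + (inclusionMatrix q *ᵥ v) i) =
        (fun i => (if i ∈ univ.image q then (1 : ZMod 2) else 0) + X2 i) +
          inclusionMatrix q *ᵥ (v + 1) := by
      rw [mulVec_add, inclusionMatrix_mulVec_one hq]
      ext i
      simp only [Pi.add_apply]
      grind
    rw [hL, ← hD]
    exact hsum.trans (le_hammingNorm_add_inclusionMatrix_mulVec_add hq D1 (hexp (v + 1) hu))

/-- X-distance preservation. Let `X̄` (of weight `w`, supported on the image of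
the injection `q`) be the measured X-logical, `f₁` its inclusion matrix, `∂₁`
the incidence matrix of a hypergraph on `w` vertices with even-weight rows and
Cheeger constant at least 1. If `X̄₂` is an X-logical operator of weight
`w₂ ≥ d` with `wt(X̄ + X̄₂) ≥ d`, then for every subset `R` of the support of
`X̄` (encoded by its indicator `v`), the operator
`L = X̄₂ + ∑_{q ∈ R} S_q = (X̄₂ + f₁ v, ∂₁ v)` has Hamming weight at least `d`. -/
theorem coneCode_X_distance (n nX nZ m w d : ℕ)
    (HX : Matrix (Fin nX) (Fin n) (ZMod 2))
    (HZ : Matrix (Fin nZ) (Fin n) (ZMod 2))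
    (q : Fin w → Fin n) (hq : Function.Injective q)
    (D1 : Matrix (Fin m) (Fin w) (ZMod 2))
    (heven : D1.mulVec (fun _ => 1) = 0)
    (hcheeger : ∀ v : Fin w → ZMod 2, v ≠ 0 → 2 * hammingNorm v ≤ w →
      hammingNorm v ≤ hammingNorm (D1.mulVec v))
    (hXbar : HZ.mulVec (fun i => if i ∈ Finset.univ.image q then (1 : ZMod 2) else 0) = 0)
    (X2 : Fin n → ZMod 2)
    (hX2 : HZ.mulVec X2 = 0)
    (hw2 : d ≤ hammingNorm X2)
    (hsum : d ≤ hammingNorm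
      (fun i => (if i ∈ Finset.univ.image q then (1 : ZMod 2) else 0) + X2 i)) :
    ∀ v : Fin w → ZMod 2,
      d ≤ hammingNorm (Sum.elim
        (fun i => X2 i +
          (Matrix.of fun i j => if i = q j then (1 : ZMod 2) else 0).mulVec v i)
        (D1.mulVec v)) :=
  coneCode_X_distance_general n m w d q hq D1 heven hcheeger X2 hw2 hsum
end

section
/- Let H̃_X = [[H_X, 0], [f₁^T, ∂₁^T]] be the X-stabilizer matrix of a cone code, where H_Z f₁ = f₀ ∂₁ and all rows of ∂₁ have even weight. If the Cheeger constant of the hypergraph with incidence matrix ∂₁ is positive (equivalently, dim ker ∂₁ = 1 with kernel spanned by the all-ones vector), then the only vectors v ∈ F₂^w for which (f₁ v, ∂₁ v) has zero support on the ancilla block (i.e., ∂₁ v = 0) are v = 0 and v = 1 (all ones); in the latter case f₁ v = X̄, the measured logical. Hence the only nontrivial product of new X-stabilizer generators supported entirely on the original qubits is X̄ itself. -/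
lemma zmod2_sum_eq_norm {k : ℕ} (x : Fin k → ZMod 2) :
    (∑ j, x j) = (hammingNorm x : ZMod 2) := by
  rw [hammingNorm]
  rw [Finset.card_eq_sum_ones, Nat.cast_sum]
  rw [Finset.sum_filter]
  congr 1
  ext j
  rcases (by decide : ∀ a : ZMod 2, a = 0 ∨ a = 1) (x j) with h | h <;> simp [h]

lemma compl_norm {k : ℕ} (v : Fin k → ZMod 2) :
    hammingNorm (fun j => v j + 1) = k - hammingNorm v := by
  unfold hammingNorm
  have h : Finset.univ.filter (fun j => v j + 1 ≠ 0) =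
      Finset.univ.filter (fun j => ¬ v j ≠ 0) := by
    ext j
    rcases (by decide : ∀ a : ZMod 2, a = 0 ∨ a = 1) (v j) with h | h <;> simp [h] <;> decide
  rw [h]
  have := Finset.card_filter_add_card_filter_not
    (s := (Finset.univ : Finset (Fin k))) (p := fun j => v j ≠ 0)
  simp only [Finset.card_univ, Fintype.card_fin] at this
  omega

/-- If the rows of `∂₁` all have even weight, `H_Z f₁ = f₀ ∂₁`, `f₁` is the
inclusion matrix of the support `Q` of `X̄` (given by the injective `q`), and
the Cheeger constant of the hypergraph with incidence matrix `∂₁` is positive,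
then the only `v` with `∂₁ v = 0` (i.e. such that the product of new
X-stabilizer generators indexed by `v` has no support on the ancilla block) are
`v = 0` and `v = 1`; in the latter case `f₁ v = X̄`. Hence the only nontrivial
product of new X-stabilizer generators supported entirely on the original
qubits is `X̄` itself. -/
theorem only_measured_logical (n nZ m w : ℕ)
    (HZ : Matrix (Fin nZ) (Fin n) (ZMod 2))
    (q : Fin w → Fin n) (hq : Function.Injective q)
    (f0 : Matrix (Fin nZ) (Fin m) (ZMod 2))
    (D1 : Matrix (Fin m) (Fin w) (ZMod 2))
    (hchain : HZ * (Matrix.of fun i j => if i = q j then (1 : ZMod 2) else 0) =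
      f0 * D1)
    (heven : ∀ e, Even (hammingNorm (D1 e)))
    (hpos : ∀ v : Fin w → ZMod 2, v ≠ 0 → 2 * hammingNorm v ≤ w →
      D1.mulVec v ≠ 0) :
    (∀ v : Fin w → ZMod 2, D1.mulVec v = 0 →
      v = 0 ∨ v = fun _ => 1) ∧
    (Matrix.of fun i j => if i = q j then (1 : ZMod 2) else 0).mulVec
        (fun _ => 1) =
      fun i : Fin n => if i ∈ Finset.univ.image q then (1 : ZMod 2) else 0 := by
  have hone : D1.mulVec (fun _ => 1) = 0 := by
    funext e
    simp only [Matrix.mulVec, dotProduct, mul_one]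
    rw [zmod2_sum_eq_norm (D1 e)]
    obtain ⟨c, hc⟩ := heven e
    rw [hc]
    show ((c + c : ℕ) : ZMod 2) = 0
    rw [← two_mul]
    push_cast
    rw [show (2 : ZMod 2) = 0 from rfl, zero_mul]
  constructor
  · intro v hv
    by_cases h0 : v = 0
    · exact Or.inl h0
    by_cases hle : 2 * hammingNorm v ≤ w
    · exact absurd hv (hpos v h0 hle)
    · right
      set u : Fin w → ZMod 2 := fun j => v j + 1 with hu
      by_cases hu0 : u = 0
      · funext j
        have := congrFun hu0 j
        simp only [hu, Pi.zero_apply] at this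
        rcases (by decide : ∀ a : ZMod 2, a = 0 ∨ a = 1) (v j) with h | h
        · rw [h] at this; simp at this
        · exact h
      · exfalso
        have hnv : hammingNorm v ≤ w := hammingNorm_le_card_fintype.trans (by simp)
        have hule : 2 * hammingNorm u ≤ w := by
          rw [hu, compl_norm]; omega
        have hDu : D1.mulVec u = 0 := by
          have : u = v + (fun _ => 1) := by funext j; simp [hu]
          rw [this, Matrix.mulVec_add, hv, hone]; simp
        exact hpos u hu0 hule hDu
  · funext i
    simp only [Matrix.mulVec, dotProduct, Matrix.of_apply, mul_one]
    by_cases hi : i ∈ Finset.univ.image q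
    · obtain ⟨j0, _, hj0⟩ := Finset.mem_image.mp hi
      rw [if_pos hi]
      rw [Finset.sum_eq_single j0]
      · simp [hj0]
      · intro j _ hj
        rw [if_neg]
        intro h
        exact hj (hq (h.symm.trans hj0.symm))
      · simp
    · rw [if_neg hi]
      apply Finset.sum_eq_zero
      intro j _
      rw [if_neg]
      intro h
      exact hi (Finset.mem_image.mpr ⟨j, Finset.mem_univ j, h.symm⟩)
end
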